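/- Let q : ℝ × ℝ → ℂ be smooth and satisfy the focusing NLS equation i·∂t q + ∂x² q + 2 q² conj(q) = 0. Let λ₁ = α + iβ with α, β ∈ ℝ, and let (φ₁, φ₂) be a smooth solution of the AKNS Lax system at λ₁ for potential q such that |φ₁(x,t)|² + |φ₂(x,t)|² > 0 for all (x,t). Then the function q¹ := q + 4β·φ₁·conj(φ₂) / (|φ₁|² + |φ₂|²) (equivalently, q¹ = q + 2i(λ₁ − conj(λ₁))·φ₁·(−conj(φ₂)) / (φ₁·conj(φ₁) + φ₂·conj(φ₂))) also satisfies the focusing NLS equation i·∂t q¹ + ∂x² q¹ + 2 (q¹)² conj(q¹) = 0 on ℝ². -/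

import Mathlib

open Complex

/-- Partial derivative in `x` of a function of `(x,t)`. -/
noncomputable def pX (f : ℝ → ℝ → ℂ) : ℝ → ℝ → ℂ := fun x t => deriv (fun x' => f x' t) x

/-- Partial derivative in `t` of a function of `(x,t)`. -/
noncomputable def pT (f : ℝ → ℝ → ℂ) : ℝ → ℝ → ℂ := fun x t => deriv (fun t' => f x t') t

/-- The focusing NLS equation `i ψ_t + ψ_xx + 2 ψ² ψ* = 0` for a function `ψ` of `(x,t)`. -/
def FocusingNLS (ψ : ℝ → ℝ → ℂ) : Prop :=
  ∀ x t : ℝ, I * pT ψ x t + pX (pX ψ) x t + 2 * (ψ x t) ^ 2 * (starRingEnd ℂ) (ψ x t) = 0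

/-- The AKNS Lax system at spectral parameter `lam` for potential `q`, for the pair
`(φ₁, φ₂)` of functions of `(x,t)`. -/
def AKNSLaxSolution (q : ℝ → ℝ → ℂ) (lam : ℂ) (φ1 φ2 : ℝ → ℝ → ℂ) : Prop :=
  ∀ x t : ℝ,
    pX φ1 x t = -I * lam * φ1 x t + q x t * φ2 x t ∧
    pX φ2 x t = I * lam * φ2 x t - (starRingEnd ℂ) (q x t) * φ1 x t ∧
    pT φ1 x t = (-2 * I * lam ^ 2 + I * q x t * (starRingEnd ℂ) (q x t)) * φ1 x t
      + (2 * q x t * lam + I * pX q x t) * φ2 x t ∧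
    pT φ2 x t = (-2 * (starRingEnd ℂ) (q x t) * lam
        + I * pX (fun x' t' => (starRingEnd ℂ) (q x' t')) x t) * φ1 x t
      + (2 * I * lam ^ 2 - I * q x t * (starRingEnd ℂ) (q x t)) * φ2 x t

/-!
Write `D = |φ₁|² + |φ₂|²`, `u = φ₁ conj(φ₂) / D` and `s = (|φ₁|² - |φ₂|²) / D`, so that
`q¹ = q + 4βu` and `s² + 4|u|² = 1`. Along the Lax flow, `u_x`, `s_x` and `u_t` are polynomials in
`u`, `conj u`, `s`, `q`, `conj q`, `q_x` and `λ`. Substituting them, the NLS residual of `q¹` equals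
that of `q` plus `16β²(q + 2βu)(s² + 4|u|² - 1)`, and both terms vanish.
-/

open ComplexConjugate

section PartialDerivatives

variable {f : ℝ → ℝ → ℂ} {x t : ℝ}

lemma pX_eq_fderiv (hf : DifferentiableAt ℝ (fun p : ℝ × ℝ => f p.1 p.2) (x, t)) :
    pX f x t = fderiv ℝ (fun p : ℝ × ℝ => f p.1 p.2) (x, t) (1, 0) := by
  have h := hf.hasFDerivAt.comp_hasDerivAt x ((hasDerivAt_id x).prodMk (hasDerivAt_const x t))
  exact h.deriv

lemma hasDerivAt_pX (hf : DifferentiableAt ℝ (fun p : ℝ × ℝ => f p.1 p.2) (x, t)) :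
    HasDerivAt (fun x' => f x' t) (pX f x t) x := by
  have h := hf.hasFDerivAt.comp_hasDerivAt x ((hasDerivAt_id x).prodMk (hasDerivAt_const x t))
  exact h.differentiableAt.hasDerivAt

lemma hasDerivAt_pT (hf : DifferentiableAt ℝ (fun p : ℝ × ℝ => f p.1 p.2) (x, t)) :
    HasDerivAt (fun t' => f x t') (pT f x t) t :=
  (hf.hasFDerivAt.comp_hasDerivAt t
    ((hasDerivAt_const t x).prodMk (hasDerivAt_id t))).differentiableAt.hasDerivAt

lemma contDiff_pX {n : WithTop ℕ∞} (hf : ContDiff ℝ (n + 1) (fun p : ℝ × ℝ => f p.1 p.2)) :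
    ContDiff ℝ n (fun p : ℝ × ℝ => pX f p.1 p.2) := by
  have hd := hf.differentiable (by simp)
  rw [funext fun p : ℝ × ℝ => pX_eq_fderiv (hd p)]
  exact (hf.fderiv_right le_rfl).clm_apply contDiff_const

lemma pX_conj (f : ℝ → ℝ → ℂ) (x t : ℝ) :
    pX (fun x' t' => conj (f x' t')) x t = conj (pX f x t) :=
  deriv.star

end PartialDerivatives

section Projector

/- `projU a b` and `projS a b` are the off-diagonal entry `P₁₂` and the difference `P₁₁ - P₂₂` of
the orthogonal projector `P` of `ℂ²` onto the line spanned by `(a, b)`. -/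

noncomputable def projU (a b : ℂ) : ℂ := a * conj b / ((normSq a : ℂ) + normSq b)

noncomputable def projS (a b : ℂ) : ℂ := ((normSq a : ℂ) - normSq b) / ((normSq a : ℂ) + normSq b)

lemma conj_projU (a b : ℂ) : conj (projU a b) = projU b a := by
  simp only [projU, map_div₀, map_mul, conj_conj, map_add, conj_ofReal]
  ring

lemma projS_sq_add_four_mul_projU_mul_conj {a b : ℂ} (h : (normSq a : ℂ) + normSq b ≠ 0) :
    projS a b ^ 2 + 4 * projU a b * conj (projU a b) = 1 := by
  rw [conj_projU, projS, projU, projU, add_comm (normSq b : ℂ)]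
  field_simp
  rw [← mul_conj, ← mul_conj]
  ring

variable {a b : ℝ → ℂ} {a' b' : ℂ} {r : ℝ}

lemma HasDerivAt.ofReal_normSq (ha : HasDerivAt a a' r) :
    HasDerivAt (fun r => (normSq (a r) : ℂ)) (a' * conj (a r) + a r * conj a') r := by
  simp_rw [← mul_conj]
  exact ha.mul ha.star

lemma HasDerivAt.projU (ha : HasDerivAt a a' r) (hb : HasDerivAt b b' r)
    (h : (normSq (a r) : ℂ) + normSq (b r) ≠ 0) :
    HasDerivAt (fun r => projU (a r) (b r))
      ((a' * conj (b r) + a r * conj b'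
        - projU (a r) (b r) * (a' * conj (a r) + a r * conj a' + b' * conj (b r) + b r * conj b'))
        / ((normSq (a r) : ℂ) + normSq (b r))) r := by
  refine ((ha.mul hb.star).div (ha.ofReal_normSq.add hb.ofReal_normSq) h).congr_deriv ?_
  simp only [_root_.projU, Complex.star_def, Pi.add_apply, Pi.mul_apply]
  field_simp
  ring

lemma HasDerivAt.projS (ha : HasDerivAt a a' r) (hb : HasDerivAt b b' r)
    (h : (normSq (a r) : ℂ) + normSq (b r) ≠ 0) :
    HasDerivAt (fun r => projS (a r) (b r))
      ((a' * conj (a r) + a r * conj a' - (b' * conj (b r) + b r * conj b')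
        - projS (a r) (b r) * (a' * conj (a r) + a r * conj a' + b' * conj (b r) + b r * conj b'))
        / ((normSq (a r) : ℂ) + normSq (b r))) r := by
  refine ((ha.ofReal_normSq.sub hb.ofReal_normSq).div
    (ha.ofReal_normSq.add hb.ofReal_normSq) h).congr_deriv ?_
  simp only [_root_.projS, Pi.add_apply, Pi.sub_apply]
  field_simp
  ring

/- Along a solution of the AKNS system at `lam`, `u = projU φ₁ φ₂` and `s = projS φ₁ φ₂` obey a
closed system `u_x = projUDerivX`, `s_x = projSDerivX`, `u_t = projUDerivT` (arguments: the
values of `q`, `q_x`, `u`, `s`). -/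

noncomputable def projUDerivX (lam q u s : ℂ) : ℂ :=
  -I * (lam + conj lam) * u - q * s + I * (lam - conj lam) * u * s

noncomputable def projSDerivX (lam q u s : ℂ) : ℂ :=
  -I * (lam - conj lam) * (1 - s ^ 2) + 2 * (conj q * u + q * conj u)

noncomputable def projUDerivT (lam q qx u s : ℂ) : ℂ :=
  (-2 * I * (lam ^ 2 + conj lam ^ 2) + 2 * I * q * conj q) * u
    + q * (lam - conj lam - (lam + conj lam) * s) - I * qx * s
    + 2 * I * (lam ^ 2 - conj lam ^ 2) * u * s
    - 2 * (lam - conj lam) * u * (q * conj u - conj q * u)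

lemma HasDerivAt.projUDerivX {lam : ℂ} {q u s : ℝ → ℂ} {q' u' s' : ℂ}
    (hq : HasDerivAt q q' r) (hu : HasDerivAt u u' r) (hs : HasDerivAt s s' r) :
    HasDerivAt (fun r => projUDerivX lam (q r) (u r) (s r))
      (-I * (lam + conj lam) * u' - (q' * s r + q r * s')
        + I * (lam - conj lam) * (u' * s r + u r * s')) r := by
  refine (((hu.const_mul (-I * (lam + conj lam))).sub (hq.mul hs)).add
    ((hu.const_mul (I * (lam - conj lam))).mul hs)).congr_deriv ?_
  ring

end Projector

namespace AKNSLaxSolution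

variable {q φ1 φ2 : ℝ → ℝ → ℂ} {lam : ℂ} {x t : ℝ} (hLax : AKNSLaxSolution q lam φ1 φ2)
  (hφ1 : DifferentiableAt ℝ (fun p : ℝ × ℝ => φ1 p.1 p.2) (x, t))
  (hφ2 : DifferentiableAt ℝ (fun p : ℝ × ℝ => φ2 p.1 p.2) (x, t))
  (hD : (normSq (φ1 x t) : ℂ) + normSq (φ2 x t) ≠ 0)
include hLax hφ1 hφ2 hD

lemma hasDerivAt_projU_x :
    HasDerivAt (fun x' => projU (φ1 x' t) (φ2 x' t))
      (projUDerivX lam (q x t) (projU (φ1 x t) (φ2 x t)) (projS (φ1 x t) (φ2 x t))) x := by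
  refine ((hasDerivAt_pX hφ1).projU (hasDerivAt_pX hφ2) hD).congr_deriv ?_
  rw [(hLax x t).1, (hLax x t).2.1]
  simp only [projU, projS, projUDerivX, map_add, map_sub, map_mul, map_neg, conj_I, conj_conj,
    ← mul_conj] at hD ⊢
  field_simp
  ring

lemma hasDerivAt_projS_x :
    HasDerivAt (fun x' => projS (φ1 x' t) (φ2 x' t))
      (projSDerivX lam (q x t) (projU (φ1 x t) (φ2 x t)) (projS (φ1 x t) (φ2 x t))) x := by
  refine ((hasDerivAt_pX hφ1).projS (hasDerivAt_pX hφ2) hD).congr_deriv ?_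
  rw [(hLax x t).1, (hLax x t).2.1]
  simp only [projU, projS, projSDerivX, map_add, map_sub, map_mul, map_neg, map_div₀, conj_I,
    conj_conj, ← mul_conj] at hD ⊢
  field_simp
  ring

lemma hasDerivAt_projU_t :
    HasDerivAt (fun t' => projU (φ1 x t') (φ2 x t'))
      (projUDerivT lam (q x t) (pX q x t) (projU (φ1 x t) (φ2 x t))
        (projS (φ1 x t) (φ2 x t))) t := by
  refine ((hasDerivAt_pT hφ1).projU (hasDerivAt_pT hφ2) hD).congr_deriv ?_
  rw [(hLax x t).2.2.1, (hLax x t).2.2.2, pX_conj]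
  simp only [projU, projS, projUDerivT, map_add, map_sub, map_mul, map_neg, map_div₀, map_pow,
    map_ofNat, conj_I, conj_conj, ← mul_conj] at hD ⊢
  field_simp
  ring

end AKNSLaxSolution

theorem darboux_nls_residual_eq_zero {α β : ℝ} {lam q qt qx qxx u s : ℂ}
    (hlam : lam = α + I * β) (hs : s ^ 2 + 4 * u * conj u = 1)
    (hNLS : I * qt + qxx + 2 * q ^ 2 * conj q = 0) :
    I * (qt + 4 * β * projUDerivT lam q qx u s)
      + (qxx + 4 * β * (-I * (lam + conj lam) * projUDerivX lam q u s
        - (qx * s + q * projSDerivX lam q u s)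
        + I * (lam - conj lam) * (projUDerivX lam q u s * s + u * projSDerivX lam q u s)))
      + 2 * (q + 4 * β * u) ^ 2 * conj (q + 4 * β * u) = 0 := by
  subst hlam
  simp only [projUDerivT, projUDerivX, projSDerivX, map_add, map_mul, conj_ofReal, conj_I,
    map_ofNat]
  linear_combination (norm := ring_nf) hNLS + 16 * β ^ 2 * (q + 2 * β * u) * hs
  simp only [I_sq, I_pow_four]
  ring

/-- one-fold Darboux transformation of the focusing NLS equation: if `q` solves
NLS and `(φ₁, φ₂)` is a nowhere-vanishing smooth solution of the AKNS Lax system at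
`λ₁ = α + iβ`, then `q¹ = q + 4β φ₁ conj(φ₂)/(|φ₁|² + |φ₂|²)` also solves NLS. -/
theorem statement6 (q : ℝ → ℝ → ℂ)
    (hq : ContDiff ℝ (⊤ : ℕ∞) (fun p : ℝ × ℝ => q p.1 p.2))
    (hNLS : FocusingNLS q)
    (α β : ℝ) (lam1 : ℂ) (hlam1 : lam1 = (α : ℂ) + I * β)
    (φ1 φ2 : ℝ → ℝ → ℂ)
    (hφ1 : ContDiff ℝ (⊤ : ℕ∞) (fun p : ℝ × ℝ => φ1 p.1 p.2))
    (hφ2 : ContDiff ℝ (⊤ : ℕ∞) (fun p : ℝ × ℝ => φ2 p.1 p.2))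
    (hLax : AKNSLaxSolution q lam1 φ1 φ2)
    (hpos : ∀ x t : ℝ, 0 < Complex.normSq (φ1 x t) + Complex.normSq (φ2 x t))
    (q1 : ℝ → ℝ → ℂ)
    (hq1 : ∀ x t : ℝ, q1 x t = q x t
      + 4 * (β : ℂ) * φ1 x t * (starRingEnd ℂ) (φ2 x t)
        / ((Complex.normSq (φ1 x t) : ℂ) + (Complex.normSq (φ2 x t) : ℂ))) :
    FocusingNLS q1 := by
  have hD : ∀ x t, (normSq (φ1 x t) : ℂ) + normSq (φ2 x t) ≠ 0 := fun x t => by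
    exact_mod_cast (hpos x t).ne'
  have hq' := hq.differentiable (by simp)
  have hqx' := (contDiff_pX (n := 1) (hq.of_le (by norm_cast))).differentiable (by simp)
  have hφ1' := hφ1.differentiable (by simp)
  have hφ2' := hφ2.differentiable (by simp)
  have hq1' : ∀ x t, q1 x t = q x t + 4 * β * projU (φ1 x t) (φ2 x t) := fun x t => by
    rw [hq1, projU]; ring
  intro x t
  have hq1_x : ∀ x', pX q1 x' t = pX q x' t + 4 * β * projUDerivX lam1 (q x' t)
      (projU (φ1 x' t) (φ2 x' t)) (projS (φ1 x' t) (φ2 x' t)) := fun x' =>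
    ((hasDerivAt_pX (hq' _)).add ((hLax.hasDerivAt_projU_x (hφ1' _) (hφ2' _) (hD x' t)).const_mul _)
      |>.congr_of_eventuallyEq (.of_forall fun y => hq1' y t)).deriv
  have hq1_xx := (hasDerivAt_pX (hqx' (x, t))).add
    (((hasDerivAt_pX (hq' _)).projUDerivX (lam := lam1)
      (hLax.hasDerivAt_projU_x (hφ1' _) (hφ2' _) (hD x t))
      (hLax.hasDerivAt_projS_x (hφ1' _) (hφ2' _) (hD x t))).const_mul (4 * (β : ℂ)))
    |>.congr_of_eventuallyEq (.of_forall hq1_x)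
  have hq1_t := (hasDerivAt_pT (hq' _)).add
    ((hLax.hasDerivAt_projU_t (hφ1' _) (hφ2' _) (hD x t)).const_mul (4 * (β : ℂ)))
    |>.congr_of_eventuallyEq (.of_forall (hq1' x))
  rw [show pT q1 x t = _ from hq1_t.deriv, show pX (pX q1) x t = _ from hq1_xx.deriv, hq1' x t]
  exact darboux_nls_residual_eq_zero hlam1 (projS_sq_add_four_mul_projU_mul_conj (hD x t))
    (hNLS x t)
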